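/- arXiv:2603.22900 — 4 statements merged into one kernel-verified Lean document; each statement's English description precedes it below -/
import Mathlib

section
/- Under common support and conditionally independent censoring, the bias of the naive IPS estimator for the policy value V(π_e,t) = E_{p(x)π_e(a|x)}[S(x,a,t)] equals E_{p(x)π_e(a|x)}[S(x,a,t)(G(t|x,a) − 1)], and this bias is non-positive (i.e., naive IPS systematically underestimates the policy value). -/
/-! The observed event `t < min L C` is `{t < L} ∩ {t < C}`, so by conditional independence of
censoring its probability is `S · G`. Common support makes the importance weight cancel the
logging propensity, hence the naive IPS estimator targets `E_{p, π_e}[S · G]` instead of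
`E_{p, π_e}[S]`, and the gap `S · (G - 1)` is non-positive because `G ≤ 1`. -/

open MeasureTheory Finset

section

variable {Ω : Type*} [MeasurableSpace Ω] (μ : Measure Ω)

theorem mul_integral_div_mul_indicator_one {w₀ w : ℝ} (hsupp : w₀ = 0 → w = 0)
    {s : Set Ω} (hs : MeasurableSet s) :
    w₀ * ∫ ω, (w / w₀) * s.indicator (fun _ => (1 : ℝ)) ω ∂μ = w * μ.real s := by
  rw [integral_const_mul, integral_indicator_const _ hs, smul_eq_mul, mul_one, ← mul_assoc,
    mul_comm w₀, div_mul_cancel_of_imp hsupp]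

theorem measureReal_lt_min_of_indep {L C : Ω → ℝ} {t : ℝ}
    (hind : μ {ω | t < L ω ∧ t < C ω} = μ {ω | t < L ω} * μ {ω | t < C ω}) :
    μ.real {ω | t < min (L ω) (C ω)} = μ.real {ω | t < L ω} * μ.real {ω | t < C ω} := by
  simp only [lt_min_iff, measureReal_def, hind, ENNReal.toReal_mul]

end

theorem naive_ips_bias_general
    {X A Ω : Type*} [Fintype X] [Fintype A] [MeasurableSpace Ω]
    (p : X → ℝ) (hp : ∀ x, 0 ≤ p x)
    (π0 πe : X → A → ℝ)
    (hπe : ∀ x a, 0 ≤ πe x a)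
    (hsupp : ∀ x a, 0 < πe x a → 0 < π0 x a)
    (μ : X → A → Measure Ω) [∀ x a, IsProbabilityMeasure (μ x a)]
    (L C : Ω → ℝ) (hL : Measurable L) (hC : Measurable C)
    (hInd : ∀ x a (s u : ℝ), μ x a {ω | s < L ω ∧ u < C ω} =
      μ x a {ω | s < L ω} * μ x a {ω | u < C ω})
    (t : ℝ) :
    ((∑ x, p x * ∑ a, π0 x a *
        ∫ ω, (πe x a / π0 x a) *
          Set.indicator {ω : Ω | t < min (L ω) (C ω)} (fun _ => (1 : ℝ)) ω ∂(μ x a))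
      - ∑ x, p x * ∑ a, πe x a * (μ x a {ω | t < L ω}).toReal
      = ∑ x, p x * ∑ a, πe x a *
          ((μ x a {ω | t < L ω}).toReal * ((μ x a {ω | t < C ω}).toReal - 1)))
    ∧ (∑ x, p x * ∑ a, πe x a *
          ((μ x a {ω | t < L ω}).toReal * ((μ x a {ω | t < C ω}).toReal - 1))) ≤ 0 := by
  have hπ0_zero x a : π0 x a = 0 → πe x a = 0 := fun h0 =>
    ((hπe x a).eq_of_not_lt fun hpos => (hsupp x a hpos).ne' h0).symm
  have hobs : MeasurableSet {ω | t < min (L ω) (C ω)} :=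
    measurableSet_lt measurable_const (hL.min hC)
  simp only [← measureReal_def]
  constructor
  · simp only [← sum_sub_distrib, ← mul_sub]
    refine sum_congr rfl fun x _ => congrArg _ <| sum_congr rfl fun a _ => ?_
    rw [mul_integral_div_mul_indicator_one _ (hπ0_zero x a) hobs,
      measureReal_lt_min_of_indep _ (hInd x a t t)]
    ring
  · exact sum_nonpos fun x _ => mul_nonpos_of_nonneg_of_nonpos (hp x) <|
      sum_nonpos fun a _ => mul_nonpos_of_nonneg_of_nonpos (hπe x a) <|
        mul_nonpos_of_nonneg_of_nonpos measureReal_nonneg (sub_nonpos.2 measureReal_le_one)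

/-- The bias of the naive IPS estimator equals
`E_{p, π_e}[S (G - 1)]` and is non-positive. -/
theorem naive_ips_bias
    {X A Ω : Type*} [Fintype X] [Fintype A] [MeasurableSpace Ω]
    (p : X → ℝ) (hp : ∀ x, 0 ≤ p x) (hp1 : ∑ x, p x = 1)
    (π0 πe : X → A → ℝ)
    (hπ0 : ∀ x a, 0 ≤ π0 x a) (hπ0s : ∀ x, ∑ a, π0 x a = 1)
    (hπe : ∀ x a, 0 ≤ πe x a) (hπes : ∀ x, ∑ a, πe x a = 1)
    (hsupp : ∀ x a, 0 < πe x a → 0 < π0 x a)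
    (μ : X → A → Measure Ω) [∀ x a, IsProbabilityMeasure (μ x a)]
    (L C : Ω → ℝ) (hL : Measurable L) (hC : Measurable C)
    (hInd : ∀ x a (s u : ℝ), μ x a {ω | s < L ω ∧ u < C ω} =
      μ x a {ω | s < L ω} * μ x a {ω | u < C ω})
    (t : ℝ) :
    ((∑ x, p x * ∑ a, π0 x a *
        ∫ ω, (πe x a / π0 x a) *
          Set.indicator {ω : Ω | t < min (L ω) (C ω)} (fun _ => (1 : ℝ)) ω ∂(μ x a))
      - ∑ x, p x * ∑ a, πe x a * (μ x a {ω | t < L ω}).toReal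
      = ∑ x, p x * ∑ a, πe x a *
          ((μ x a {ω | t < L ω}).toReal * ((μ x a {ω | t < C ω}).toReal - 1)))
    ∧ (∑ x, p x * ∑ a, πe x a *
          ((μ x a {ω | t < L ω}).toReal * ((μ x a {ω | t < C ω}).toReal - 1))) ≤ 0 :=
  naive_ips_bias_general p hp π0 πe hπe hsupp μ L C hL hC hInd t
end

section
/- Under common support and conditionally independent censoring, if the censoring survival function G(t|x,a) = P(C > t | x, a) is strictly positive and the propensity score π_0 is correctly specified, then the IPCW-IPS estimator, which averages (π_e(a|x)/π_0(a|x)) · I{min(L,C) > t} / G(t|x,a), is an unbiased estimator of the policy value V(π_e,t) = E_{p(x)π_e(a|x)}[S(x,a,t)]. -/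
/-!
Conditioning on `(x, a)`, independence of `L` and `C` factors the probability of
`min L C > t` as `S(x,a,t) · G(t|x,a)`, so dividing the indicator by `G` leaves `S`.
Averaging over `a ~ π₀` with the weight `πₑ / π₀` then turns the `π₀`-average into a
`πₑ`-average: on actions with `π₀ = 0` common support forces `πₑ = 0`.
-/

open MeasureTheory Finset

section Censoring

variable {Ω : Type*} [MeasurableSpace Ω] {μ : Measure Ω} {L C : Ω → ℝ} {t : ℝ}

lemma measureReal_lt_min_eq_mul
    (hInd : μ {ω | t < L ω ∧ t < C ω} = μ {ω | t < L ω} * μ {ω | t < C ω}) :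
    μ.real {ω | t < min (L ω) (C ω)} = μ.real {ω | t < L ω} * μ.real {ω | t < C ω} := by
  simp only [lt_min_iff, measureReal_def, hInd, ENNReal.toReal_mul]

lemma integral_indicator_lt_min_div_eq (hL : Measurable L) (hC : Measurable C)
    (hInd : μ {ω | t < L ω ∧ t < C ω} = μ {ω | t < L ω} * μ {ω | t < C ω})
    (hG : μ.real {ω | t < C ω} ≠ 0) :
    ∫ ω, {ω | t < min (L ω) (C ω)}.indicator (fun _ => (1 : ℝ)) ω / μ.real {ω | t < C ω} ∂μ
      = μ.real {ω | t < L ω} := by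
  have hmeas : MeasurableSet {ω | t < min (L ω) (C ω)} :=
    measurableSet_lt measurable_const (hL.min hC)
  rw [integral_div, integral_indicator_const _ hmeas, smul_eq_mul, mul_one,
    measureReal_lt_min_eq_mul hInd, mul_div_cancel_right₀ _ hG]

end Censoring

lemma mul_div_mul_eq_of_support {q r : ℝ} (hr : 0 ≤ r) (hsupp : 0 < r → 0 < q) (c : ℝ) :
    q * (r / q * c) = r * c := by
  rcases eq_or_ne q 0 with hq | hq
  · have hr0 : r = 0 := by
      by_contra hne
      exact (hsupp (hr.lt_of_ne' hne)).ne' hq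
    simp [hq, hr0]
  · field_simp

lemma sum_mul_div_mul_eq_of_support {A : Type*} (s : Finset A) {π0 πe : A → ℝ}
    (hπe : ∀ a, 0 ≤ πe a) (hsupp : ∀ a, 0 < πe a → 0 < π0 a) (g : A → ℝ) :
    ∑ a ∈ s, π0 a * (πe a / π0 a * g a) = ∑ a ∈ s, πe a * g a :=
  sum_congr rfl fun a _ => mul_div_mul_eq_of_support (hπe a) (hsupp a) (g a)

theorem ipcw_ips_unbiased_general
    {X A Ω : Type*} [Fintype X] [Fintype A] [MeasurableSpace Ω]
    (p : X → ℝ)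
    (π0 πe : X → A → ℝ)
    (hπe : ∀ x a, 0 ≤ πe x a)
    (hsupp : ∀ x a, 0 < πe x a → 0 < π0 x a)
    (μ : X → A → Measure Ω)
    (L C : Ω → ℝ) (hL : Measurable L) (hC : Measurable C)
    (hInd : ∀ x a (s u : ℝ), μ x a {ω | s < L ω ∧ u < C ω} =
      μ x a {ω | s < L ω} * μ x a {ω | u < C ω})
    (t : ℝ)
    (hG : ∀ x a, 0 < (μ x a {ω | t < C ω}).toReal) :
    ∑ x, p x * ∑ a, π0 x a *
        ∫ ω, (πe x a / π0 x a) *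
          (Set.indicator {ω : Ω | t < min (L ω) (C ω)} (fun _ => (1 : ℝ)) ω
            / (μ x a {ω | t < C ω}).toReal) ∂(μ x a)
      = ∑ x, p x * ∑ a, πe x a * (μ x a {ω | t < L ω}).toReal := by
  refine sum_congr rfl fun x _ => congrArg (p x * ·) ?_
  have hS : ∀ a, ∫ ω, {ω | t < min (L ω) (C ω)}.indicator (fun _ => (1 : ℝ)) ω
      / (μ x a {ω | t < C ω}).toReal ∂(μ x a) = (μ x a {ω | t < L ω}).toReal :=
    fun a => integral_indicator_lt_min_div_eq hL hC (hInd x a t t) (hG x a).ne'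
  simp only [integral_const_mul, hS]
  exact sum_mul_div_mul_eq_of_support _ (hπe x) (hsupp x) _

/-- Unbiasedness of the IPCW-IPS estimator when `G > 0` and the propensity
score is correctly specified. -/
theorem ipcw_ips_unbiased
    {X A Ω : Type*} [Fintype X] [Fintype A] [MeasurableSpace Ω]
    (p : X → ℝ) (hp : ∀ x, 0 ≤ p x) (hp1 : ∑ x, p x = 1)
    (π0 πe : X → A → ℝ)
    (hπ0 : ∀ x a, 0 ≤ π0 x a) (hπ0s : ∀ x, ∑ a, π0 x a = 1)
    (hπe : ∀ x a, 0 ≤ πe x a) (hπes : ∀ x, ∑ a, πe x a = 1)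
    (hsupp : ∀ x a, 0 < πe x a → 0 < π0 x a)
    (μ : X → A → Measure Ω) [∀ x a, IsProbabilityMeasure (μ x a)]
    (L C : Ω → ℝ) (hL : Measurable L) (hC : Measurable C)
    (hInd : ∀ x a (s u : ℝ), μ x a {ω | s < L ω ∧ u < C ω} =
      μ x a {ω | s < L ω} * μ x a {ω | u < C ω})
    (t : ℝ)
    (hG : ∀ x a, 0 < (μ x a {ω | t < C ω}).toReal) :
    ∑ x, p x * ∑ a, π0 x a *
        ∫ ω, (πe x a / π0 x a) *
          (Set.indicator {ω : Ω | t < min (L ω) (C ω)} (fun _ => (1 : ℝ)) ω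
            / (μ x a {ω | t < C ω}).toReal) ∂(μ x a)
      = ∑ x, p x * ∑ a, πe x a * (μ x a {ω | t < L ω}).toReal :=
  ipcw_ips_unbiased_general p π0 πe hπe hsupp μ L C hL hC hInd t hG
end

section
/- Under common support, conditionally independent censoring, and a correctly specified censoring model G(t|x,a) > 0, the IPCW-DR estimator is unbiased for V(π_e,t) if the propensity score π_0(a|x) is correctly specified, for any outcome model Ŝ(x,a,t). That is, E[w(x,a)(I{min(L,C)>t}/G(t|x,a) − Ŝ(x,a,t)) + Σ_{a'} π_e(a'|x) Ŝ(x,a',t)] = V(π_e,t), where w(x,a) = π_e(a|x)/π_0(a|x) and the outer expectation is over (x,a,L,C) ~ p(x)π_0(a|x)p(L,C|x,a). -/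
/-!
Conditioning on `(x, a)`, independence of `L` and `C` factors `P(min L C > t)` as `S(t) G(t)`,
so the IPCW term `I{min(L, C) > t} / G(t)` has mean `S(t)`. Averaging over `a ~ π₀`, the weight
`πₑ/π₀` turns the `π₀`-average into a `πₑ`-average (common support makes this exact), and the
correction term `-w Ŝ` cancels the plug-in term `∑ πₑ Ŝ` whatever `Ŝ` is.
-/

open MeasureTheory Finset

section Integrals

variable {Ω : Type*} [MeasurableSpace Ω]

theorem integral_mul_sub_add_const (μ : Measure Ω) [IsProbabilityMeasure μ] {f : Ω → ℝ}
    (hf : Integrable f μ) (w s d : ℝ) :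
    ∫ ω, (w * (f ω - s) + d) ∂μ = w * ((∫ ω, f ω ∂μ) - s) + d := by
  have hterm : Integrable (fun ω => w * (f ω - s)) μ := (hf.sub (integrable_const s)).const_mul w
  rw [integral_add hterm (integrable_const d), integral_const_mul,
    integral_sub hf (integrable_const s), integral_const, integral_const]
  simp

variable {μ : Measure Ω} {L C : Ω → ℝ} {t : ℝ}

theorem integral_indicator_lt_min_div_survival (hL : Measurable L) (hC : Measurable C)
    (hInd : μ {ω | t < L ω ∧ t < C ω} = μ {ω | t < L ω} * μ {ω | t < C ω})
    (hG : (μ {ω | t < C ω}).toReal ≠ 0) :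
    ∫ ω, Set.indicator {ω : Ω | t < min (L ω) (C ω)} (fun _ => (1 : ℝ)) ω
        / (μ {ω | t < C ω}).toReal ∂μ = (μ {ω | t < L ω}).toReal := by
  have hset : {ω : Ω | t < min (L ω) (C ω)} = {ω : Ω | t < L ω ∧ t < C ω} := by
    simp only [lt_min_iff]
  rw [integral_div, integral_indicator (measurableSet_lt measurable_const (hL.min hC)),
    setIntegral_const, smul_eq_mul, mul_one, hset, measureReal_def, hInd, ENNReal.toReal_mul,
    mul_div_cancel_right₀ _ hG]

end Integrals

theorem sum_mul_dr_eq_sum_mul {A K : Type*} [Fintype A] [Field K] (π₀ πₑ S Ŝ : A → K)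
    (hπ₀ : ∑ a, π₀ a = 1) (hsupp : ∀ a, π₀ a = 0 → πₑ a = 0) :
    ∑ a, π₀ a * (πₑ a / π₀ a * (S a - Ŝ a) + ∑ a', πₑ a' * Ŝ a') = ∑ a, πₑ a * S a := by
  calc ∑ a, π₀ a * (πₑ a / π₀ a * (S a - Ŝ a) + ∑ a', πₑ a' * Ŝ a')
      = ∑ a, πₑ a * (S a - Ŝ a) + (∑ a, π₀ a) * ∑ a', πₑ a' * Ŝ a' := by
        simp only [mul_add, ← mul_assoc, mul_div_cancel_of_imp' (hsupp _), sum_add_distrib,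
          sum_mul]
    _ = ∑ a, πₑ a * S a := by
        rw [hπ₀, one_mul, ← sum_add_distrib]
        exact sum_congr rfl fun a _ => by ring

theorem ipcw_dr_unbiased_propensity_general
    {X A Ω : Type*} [Fintype X] [Fintype A] [MeasurableSpace Ω]
    (p : X → ℝ)
    (π0 πe : X → A → ℝ)
    (hπ0s : ∀ x, ∑ a, π0 x a = 1)
    (hπe : ∀ x a, 0 ≤ πe x a)
    (hsupp : ∀ x a, 0 < πe x a → 0 < π0 x a)
    (μ : X → A → Measure Ω) [∀ x a, IsProbabilityMeasure (μ x a)]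
    (L C : Ω → ℝ) (hL : Measurable L) (hC : Measurable C)
    (hInd : ∀ x a (s u : ℝ), μ x a {ω | s < L ω ∧ u < C ω} =
      μ x a {ω | s < L ω} * μ x a {ω | u < C ω})
    (t : ℝ)
    (hG : ∀ x a, 0 < (μ x a {ω | t < C ω}).toReal)
    (Shat : X → A → ℝ → ℝ) :
    ∑ x, p x * ∑ a, π0 x a *
        ∫ ω, ((πe x a / π0 x a) *
            (Set.indicator {ω : Ω | t < min (L ω) (C ω)} (fun _ => (1 : ℝ)) ω
              / (μ x a {ω | t < C ω}).toReal - Shat x a t)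
          + ∑ a', πe x a' * Shat x a' t) ∂(μ x a)
      = ∑ x, p x * ∑ a, πe x a * (μ x a {ω | t < L ω}).toReal := by
  have hint : ∀ x a, Integrable (fun ω => Set.indicator {ω : Ω | t < min (L ω) (C ω)}
      (fun _ => (1 : ℝ)) ω / (μ x a {ω | t < C ω}).toReal) (μ x a) := fun x a =>
    ((integrable_const 1).indicator (measurableSet_lt measurable_const (hL.min hC))).div_const _
  have hsupp0 : ∀ x a, π0 x a = 0 → πe x a = 0 := fun x a h0 =>
    le_antisymm (not_lt.mp fun hpos => (hsupp x a hpos).ne' h0) (hπe x a)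
  refine sum_congr rfl fun x _ => congrArg (p x * ·) ?_
  simp_rw [integral_mul_sub_add_const _ (hint x _),
    integral_indicator_lt_min_div_survival hL hC (hInd x _ t t) (hG x _).ne']
  exact sum_mul_dr_eq_sum_mul _ _ _ _ (hπ0s x) (hsupp0 x)

/-- Unbiasedness of the IPCW-DR estimator when the propensity score is
correctly specified, for an arbitrary outcome model `Ŝ`. -/
theorem ipcw_dr_unbiased_propensity
    {X A Ω : Type*} [Fintype X] [Fintype A] [MeasurableSpace Ω]
    (p : X → ℝ) (hp : ∀ x, 0 ≤ p x) (hp1 : ∑ x, p x = 1)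
    (π0 πe : X → A → ℝ)
    (hπ0 : ∀ x a, 0 ≤ π0 x a) (hπ0s : ∀ x, ∑ a, π0 x a = 1)
    (hπe : ∀ x a, 0 ≤ πe x a) (hπes : ∀ x, ∑ a, πe x a = 1)
    (hsupp : ∀ x a, 0 < πe x a → 0 < π0 x a)
    (μ : X → A → Measure Ω) [∀ x a, IsProbabilityMeasure (μ x a)]
    (L C : Ω → ℝ) (hL : Measurable L) (hC : Measurable C)
    (hInd : ∀ x a (s u : ℝ), μ x a {ω | s < L ω ∧ u < C ω} =
      μ x a {ω | s < L ω} * μ x a {ω | u < C ω})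
    (t : ℝ)
    (hG : ∀ x a, 0 < (μ x a {ω | t < C ω}).toReal)
    (Shat : X → A → ℝ → ℝ) :
    ∑ x, p x * ∑ a, π0 x a *
        ∫ ω, ((πe x a / π0 x a) *
            (Set.indicator {ω : Ω | t < min (L ω) (C ω)} (fun _ => (1 : ℝ)) ω
              / (μ x a {ω | t < C ω}).toReal - Shat x a t)
          + ∑ a', πe x a' * Shat x a' t) ∂(μ x a)
      = ∑ x, p x * ∑ a, πe x a * (μ x a {ω | t < L ω}).toReal :=
  ipcw_dr_unbiased_propensity_general p π0 πe hπ0s hπe hsupp μ L C hL hC hInd t hG Shat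
end

section
/- Under conditionally independent censoring with correct outcome model Ŝ = S and G > 0, the IPCW-DR Lagrangian gradient estimator is unbiased for any weight function w': the expectation of w'(x,a)(I{min(L,C)>t}/G(t|x,a) − S(x,a,t))∇_θ log π_θ(a|x) + Σ_{a'} π_θ(a'|x)(S(x,a',t) − λc(x,a'))∇_θ log π_θ(a'|x) over (x,a,L,C) ~ p(x)π_0(a|x)p(L,C|x,a) equals ∇_θ L(π_θ,t,λ) = E_{p(x)π_θ(a|x)}[(S(x,a,t) − λc(x,a))∇_θ log π_θ(a|x)]. -/
open MeasureTheory Finset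

/-- Unbiasedness of the IPCW-DR Lagrangian gradient estimator when the outcome
model is correct, for an arbitrary weight function `w'`. -/
theorem ipcw_dr_lagrangian_gradient_unbiased
    {X A Ω : Type*} [Fintype X] [Fintype A] [MeasurableSpace Ω] {d : ℕ}
    (p : X → ℝ) (hp : ∀ x, 0 ≤ p x) (hp1 : ∑ x, p x = 1)
    (π0 : X → A → ℝ)
    (hπ0 : ∀ x a, 0 ≤ π0 x a) (hπ0s : ∀ x, ∑ a, π0 x a = 1)
    (π : (Fin d → ℝ) → X → A → ℝ)
    (hpos : ∀ θ x a, 0 < π θ x a)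
    (hsum : ∀ θ x, ∑ a, π θ x a = 1)
    (θ0 : Fin d → ℝ)
    (hdiff : ∀ x a, DifferentiableAt ℝ (fun θ => π θ x a) θ0)
    (μ : X → A → Measure Ω) [∀ x a, IsProbabilityMeasure (μ x a)]
    (L C : Ω → ℝ) (hL : Measurable L) (hC : Measurable C)
    (hInd : ∀ x a (s u : ℝ), μ x a {ω | s < L ω ∧ u < C ω} =
      μ x a {ω | s < L ω} * μ x a {ω | u < C ω})
    (t : ℝ)
    (hG : ∀ x a, 0 < (μ x a {ω | t < C ω}).toReal)
    (c : X → A → ℝ) (lam : ℝ) (hlam : 0 ≤ lam)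
    (w' : X → A → ℝ)
    (v : Fin d → ℝ) :
    ∑ x, p x * ∑ a, π0 x a *
        ∫ ω, (w' x a *
            (Set.indicator {ω : Ω | t < min (L ω) (C ω)} (fun _ => (1 : ℝ)) ω
                / (μ x a {ω | t < C ω}).toReal - (μ x a {ω | t < L ω}).toReal) *
            (fderiv ℝ (fun θ => Real.log (π θ x a)) θ0 v)
          + ∑ a', π θ0 x a' *
              (((μ x a' {ω | t < L ω}).toReal - lam * c x a') *
                (fderiv ℝ (fun θ => Real.log (π θ x a')) θ0 v))) ∂(μ x a)
      = ∑ x, p x * ∑ a, π θ0 x a *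
          (((μ x a {ω | t < L ω}).toReal - lam * c x a) *
            (fderiv ℝ (fun θ => Real.log (π θ x a)) θ0 v)) := by

  have main : ∀ x a, (∫ ω, (w' x a *
            (Set.indicator {ω : Ω | t < min (L ω) (C ω)} (fun _ => (1 : ℝ)) ω
                / (μ x a {ω | t < C ω}).toReal - (μ x a {ω | t < L ω}).toReal) *
            (fderiv ℝ (fun θ => Real.log (π θ x a)) θ0 v)
          + ∑ a', π θ0 x a' *
              (((μ x a' {ω | t < L ω}).toReal - lam * c x a') *
                (fderiv ℝ (fun θ => Real.log (π θ x a')) θ0 v))) ∂(μ x a))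
      = ∑ a', π θ0 x a' *
              (((μ x a' {ω | t < L ω}).toReal - lam * c x a') *
                (fderiv ℝ (fun θ => Real.log (π θ x a')) θ0 v)) := by
    intro x a
    set G : ℝ := (μ x a {ω | t < C ω}).toReal with hGdef
    set S : ℝ := (μ x a {ω | t < L ω}).toReal with hSdef
    set k : ℝ := w' x a * (fderiv ℝ (fun θ => Real.log (π θ x a)) θ0 v) with hk
    set c2 : ℝ := ∑ a', π θ0 x a' *
              (((μ x a' {ω | t < L ω}).toReal - lam * c x a') *
                (fderiv ℝ (fun θ => Real.log (π θ x a')) θ0 v)) with hc2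
    have hmeas : MeasurableSet {ω : Ω | t < min (L ω) (C ω)} := by
      have : Measurable fun ω => min (L ω) (C ω) := hL.min hC
      exact measurableSet_lt measurable_const this
    have hset : {ω : Ω | t < min (L ω) (C ω)} = {ω | t < L ω ∧ t < C ω} := by
      ext ω; simp [lt_min_iff]
    have hind_int : Integrable
        (Set.indicator {ω : Ω | t < min (L ω) (C ω)} (fun _ => (1 : ℝ))) (μ x a) :=
      (integrable_const (1 : ℝ)).indicator hmeas
    have hμS : (μ x a {ω : Ω | t < min (L ω) (C ω)}).toReal = S * G := by
      rw [hset, hInd x a t t, ENNReal.toReal_mul]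
    have hint_ind : (∫ ω, Set.indicator {ω : Ω | t < min (L ω) (C ω)}
        (fun _ => (1 : ℝ)) ω ∂(μ x a)) = S * G :=
      (MeasureTheory.integral_indicator_one hmeas).trans hμS
    have hGpos : 0 < G := hG x a
    have hresid : Integrable (fun ω => Set.indicator {ω : Ω | t < min (L ω) (C ω)}
        (fun _ => (1 : ℝ)) ω / G - S) (μ x a) :=
      (hind_int.div_const G).sub (integrable_const S)
    have hzero : (∫ ω, (Set.indicator {ω : Ω | t < min (L ω) (C ω)}
        (fun _ => (1 : ℝ)) ω / G - S) ∂(μ x a)) = 0 := by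
      rw [integral_sub (hind_int.div_const G) (integrable_const S),
        integral_div, hint_ind, integral_const]
      simp [mul_comm, mul_div_assoc, div_self hGpos.ne']
    have hrw : (fun ω => w' x a *
            (Set.indicator {ω : Ω | t < min (L ω) (C ω)} (fun _ => (1 : ℝ)) ω
                / G - S) *
            (fderiv ℝ (fun θ => Real.log (π θ x a)) θ0 v) + c2)
        = fun ω => k * (Set.indicator {ω : Ω | t < min (L ω) (C ω)}
            (fun _ => (1 : ℝ)) ω / G - S) + c2 := by
      funext ω; rw [hk]; ring
    calc (∫ ω, (w' x a *
            (Set.indicator {ω : Ω | t < min (L ω) (C ω)} (fun _ => (1 : ℝ)) ω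
                / G - S) *
            (fderiv ℝ (fun θ => Real.log (π θ x a)) θ0 v) + c2) ∂(μ x a))
        = ∫ ω, (k * (Set.indicator {ω : Ω | t < min (L ω) (C ω)}
            (fun _ => (1 : ℝ)) ω / G - S) + c2) ∂(μ x a) := by rw [hrw]
      _ = (∫ ω, k * (Set.indicator {ω : Ω | t < min (L ω) (C ω)}
            (fun _ => (1 : ℝ)) ω / G - S) ∂(μ x a)) + ∫ _, c2 ∂(μ x a) :=
          integral_add (hresid.const_mul k) (integrable_const c2)
      _ = k * (∫ ω, (Set.indicator {ω : Ω | t < min (L ω) (C ω)}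
            (fun _ => (1 : ℝ)) ω / G - S) ∂(μ x a)) + c2 := by
          rw [MeasureTheory.integral_const_mul, integral_const]; simp
      _ = c2 := by rw [hzero]; ring
  have step : ∀ x, (∑ a, π0 x a *
        ∫ ω, (w' x a *
            (Set.indicator {ω : Ω | t < min (L ω) (C ω)} (fun _ => (1 : ℝ)) ω
                / (μ x a {ω | t < C ω}).toReal - (μ x a {ω | t < L ω}).toReal) *
            (fderiv ℝ (fun θ => Real.log (π θ x a)) θ0 v)
          + ∑ a', π θ0 x a' *
              (((μ x a' {ω | t < L ω}).toReal - lam * c x a') *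
                (fderiv ℝ (fun θ => Real.log (π θ x a')) θ0 v))) ∂(μ x a))
      = ∑ a, π θ0 x a *
          (((μ x a {ω | t < L ω}).toReal - lam * c x a) *
            (fderiv ℝ (fun θ => Real.log (π θ x a)) θ0 v)) := by
    intro x
    calc _ = ∑ a, π0 x a * ∑ a', π θ0 x a' *
              (((μ x a' {ω | t < L ω}).toReal - lam * c x a') *
                (fderiv ℝ (fun θ => Real.log (π θ x a')) θ0 v)) := by
            refine Finset.sum_congr rfl fun a _ => ?_
            rw [main x a]
      _ = _ := by rw [← Finset.sum_mul, hπ0s x, one_mul]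
  exact Finset.sum_congr rfl fun x _ => by rw [step x]
end
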